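/- arXiv:2209.04552 — 4 statements merged into one kernel-verified Lean document; each statement's English description precedes it below -/
import Mathlib

section
/- If G is a connected claw-free simple graph with minimum degree at least 1 and C is a minimum vertex cover of G, then there exists a zero forcing set S of G with |S| = |C| = β(G) and |S ∩ C| ≥ |C| − 1. -/
open SimpleGraph

namespace ZFPaper

variable {V : Type*} {W : Type*}

/-- The degree of a vertex, as the cardinality of its neighbor set. -/
noncomputable def degSet (G : SimpleGraph V) (v : V) : ℕ := (G.neighborSet v).ncard

/-- The maximum degree of a graph. -/
noncomputable def maxDeg (G : SimpleGraph V) : ℕ := sSup {d : ℕ | ∃ v, degSet G v = d}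

/-- The minimum degree of a graph. -/
noncomputable def minDeg (G : SimpleGraph V) : ℕ := sInf {d : ℕ | ∃ v, degSet G v = d}

/-- A set of vertices is a vertex cover if every edge has an endpoint in it. -/
def IsVC (G : SimpleGraph V) (C : Set V) : Prop :=
  ∀ ⦃u w : V⦄, G.Adj u w → u ∈ C ∨ w ∈ C

/-- The vertex cover number β(G). -/
noncomputable def vcNum (G : SimpleGraph V) : ℕ :=
  sInf {m : ℕ | ∃ C : Set V, IsVC G C ∧ C.ncard = m}

/-- A set of vertices is independent if its vertices are pairwise non-adjacent. -/
def IsIndep (G : SimpleGraph V) (S : Set V) : Prop :=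
  ∀ ⦃u : V⦄, u ∈ S → ∀ ⦃w : V⦄, w ∈ S → ¬ G.Adj u w

/-- The independence number α(G). -/
noncomputable def indepNum (G : SimpleGraph V) : ℕ :=
  sSup {m : ℕ | ∃ S : Set V, IsIndep G S ∧ S.ncard = m}

/-- `Forced G B v` means that, starting from the blue set `B`, the vertex `v` is
eventually colored blue by the zero forcing process: a blue vertex with a unique
white neighbor forces that neighbor to become blue. -/
inductive Forced (G : SimpleGraph V) (B : Set V) : V → Prop
  | init : ∀ v ∈ B, Forced G B v
  | force : ∀ u w : V, Forced G B u → G.Adj u w →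
      (∀ x : V, G.Adj u x → x ≠ w → Forced G B x) → Forced G B w

/-- A zero forcing set: iterating the forcing process colors every vertex blue. -/
def IsZFS (G : SimpleGraph V) (B : Set V) : Prop := ∀ v : V, Forced G B v

/-- The zero forcing number Z(G). -/
noncomputable def zfNum (G : SimpleGraph V) : ℕ :=
  sInf {m : ℕ | ∃ B : Set V, IsZFS G B ∧ B.ncard = m}

/-- A graph is claw-free if it has no induced `K_{1,3}`. -/
def ClawFree (G : SimpleGraph V) : Prop :=
  ¬ ∃ (v a b c : V), G.Adj v a ∧ G.Adj v b ∧ G.Adj v c ∧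
      a ≠ b ∧ a ≠ c ∧ b ≠ c ∧ ¬ G.Adj a b ∧ ¬ G.Adj a c ∧ ¬ G.Adj b c

/-- The join `G ∨ H` of two graphs: disjoint union plus all edges between the parts. -/
def joinG (G : SimpleGraph V) (H : SimpleGraph W) : SimpleGraph (V ⊕ W) where
  Adj a b :=
    (∃ u v, a = Sum.inl u ∧ b = Sum.inl v ∧ G.Adj u v) ∨
    (∃ u v, a = Sum.inr u ∧ b = Sum.inr v ∧ H.Adj u v) ∨
    (∃ u v, a = Sum.inl u ∧ b = Sum.inr v) ∨
    (∃ u v, a = Sum.inr u ∧ b = Sum.inl v)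
  symm := by
    constructor
    rintro a b (⟨u, v, rfl, rfl, h⟩ | ⟨u, v, rfl, rfl, h⟩ | ⟨u, v, rfl, rfl⟩ | ⟨u, v, rfl, rfl⟩)
    · exact Or.inl ⟨v, u, rfl, rfl, h.symm⟩
    · exact Or.inr (Or.inl ⟨v, u, rfl, rfl, h.symm⟩)
    · exact Or.inr (Or.inr (Or.inr ⟨v, u, rfl, rfl⟩))
    · exact Or.inr (Or.inr (Or.inl ⟨v, u, rfl, rfl⟩))
  loopless := by
    constructor
    rintro a (⟨u, v, rfl, h, hadj⟩ | ⟨u, v, rfl, h, hadj⟩ | ⟨u, v, rfl, h⟩ | ⟨u, v, rfl, h⟩) <;>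
      simp_all

/-- The graph obtained from `G` by a `k`-leaf support vertex addition at `v`:
a new support vertex `w = Sum.inr none` is attached to `v`, and `k` new leaves
`Sum.inr (some i)` are attached to `w`. -/
def lsva (G : SimpleGraph V) (v : V) (k : ℕ) : SimpleGraph (V ⊕ Option (Fin k)) where
  Adj a b :=
    (∃ x y, a = Sum.inl x ∧ b = Sum.inl y ∧ G.Adj x y) ∨
    (a = Sum.inl v ∧ b = Sum.inr none) ∨
    (a = Sum.inr none ∧ b = Sum.inl v) ∨
    (∃ i : Fin k, a = Sum.inr none ∧ b = Sum.inr (some i)) ∨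
    (∃ i : Fin k, a = Sum.inr (some i) ∧ b = Sum.inr none)
  symm := by
    constructor
    rintro a b (⟨x, y, rfl, rfl, h⟩ | ⟨rfl, rfl⟩ | ⟨rfl, rfl⟩ | ⟨i, rfl, rfl⟩ | ⟨i, rfl, rfl⟩)
    · exact Or.inl ⟨y, x, rfl, rfl, h.symm⟩
    · exact Or.inr (Or.inr (Or.inl ⟨rfl, rfl⟩))
    · exact Or.inr (Or.inl ⟨rfl, rfl⟩)
    · exact Or.inr (Or.inr (Or.inr (Or.inr ⟨i, rfl, rfl⟩)))
    · exact Or.inr (Or.inr (Or.inr (Or.inl ⟨i, rfl, rfl⟩)))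
  loopless := by
    constructor
    rintro a (⟨x, y, rfl, h, hadj⟩ | ⟨rfl, h⟩ | ⟨rfl, h⟩ | ⟨i, rfl, h⟩ | ⟨i, rfl, h⟩) <;> simp_all

/-- `LSVAChain m G H` means `H` is obtained from `G` by a finite sequence of
`m`-leaf support vertex additions (each applied at a vertex of degree at most `m-1`). -/
inductive LSVAChain (m : ℕ) : {α : Type} → SimpleGraph α → {β : Type} → SimpleGraph β → Prop
  | refl {α : Type} (G : SimpleGraph α) : LSVAChain m G G
  | step {α : Type} {G : SimpleGraph α} {β : Type} {H : SimpleGraph β} (v : β)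
      (hv : (H.neighborSet v).ncard ≤ m - 1) :
      LSVAChain m G H → LSVAChain m G (lsva H v m)

/-- The graph obtained from the complete graph `K_n` by attaching one pendant
vertex to each vertex in the set `A`. -/
def pendantKn (n : ℕ) (A : Finset (Fin n)) : SimpleGraph (Fin n ⊕ {a : Fin n // a ∈ A}) where
  Adj a b :=
    (∃ x y : Fin n, a = Sum.inl x ∧ b = Sum.inl y ∧ x ≠ y) ∨
    (∃ p : {a : Fin n // a ∈ A}, a = Sum.inl p.1 ∧ b = Sum.inr p) ∨
    (∃ p : {a : Fin n // a ∈ A}, a = Sum.inr p ∧ b = Sum.inl p.1)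
  symm := by
    constructor
    rintro a b (⟨x, y, rfl, rfl, h⟩ | ⟨p, rfl, rfl⟩ | ⟨p, rfl, rfl⟩)
    · exact Or.inl ⟨y, x, rfl, rfl, h.symm⟩
    · exact Or.inr (Or.inr ⟨p, rfl, rfl⟩)
    · exact Or.inr (Or.inl ⟨p, rfl, rfl⟩)
  loopless := by
    constructor
    rintro a (⟨x, y, rfl, h, hne⟩ | ⟨p, rfl, h⟩ | ⟨p, rfl, h⟩) <;> simp_all

/-- The graph obtained from a cycle `C_k` with vertices `v_1, …, v_k` (the `Sum.inl`
vertices) together with disjoint complete graphs `K_{n i}` (the `Sum.inr` vertices),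
where every vertex of the `i`-th complete graph is joined to both `v_i` and `v_{i+1}`
(indices mod `k`). -/
def cycleCliques (k : ℕ) (n : Fin k → ℕ) :
    SimpleGraph (Fin k ⊕ Σ i : Fin k, Fin (n i)) where
  Adj a b :=
    match a, b with
    | Sum.inl i, Sum.inl j =>
        i ≠ j ∧ ((j : ℕ) = ((i : ℕ) + 1) % k ∨ (i : ℕ) = ((j : ℕ) + 1) % k)
    | Sum.inl j, Sum.inr s => (j : ℕ) = (s.1 : ℕ) ∨ (j : ℕ) = ((s.1 : ℕ) + 1) % k
    | Sum.inr s, Sum.inl j => (j : ℕ) = (s.1 : ℕ) ∨ (j : ℕ) = ((s.1 : ℕ) + 1) % k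
    | Sum.inr s, Sum.inr t => s ≠ t ∧ s.1 = t.1
  symm := by
    constructor
    rintro (i | s) (j | t) h
    · exact ⟨Ne.symm h.1, h.2.symm⟩
    · exact h
    · exact h
    · exact ⟨Ne.symm h.1, h.2.symm⟩
  loopless := by
    constructor
    rintro (i | s) h
    · exact h.1 rfl
    · exact h.1 rfl

/-
If `C = V` then `C` itself forces everything. Otherwise take `v ∉ C` and a neighbour `c` of `v`;
all neighbours of `v` lie in `C`, so from `S = C - c + v` the vertex `v` forces `c` and all of `C`
turns blue. Suppose some vertex stays white. A cover vertex with a white neighbour `u` cannot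
force it, so it has a second white neighbour `x`; as `u`, `x` lie outside `C` they are
non-adjacent, and claw-freeness makes every blue neighbour of that cover vertex adjacent to `u`
or `x`, hence again a cover vertex with a white neighbour. So the white vertices together with
the cover vertices having a white neighbour form a set closed under adjacency; by connectivity
it is everything, yet `v ∉ C` is blue.
-/

theorem _root_.SimpleGraph.Connected.forall_mem_of_adj_closed {G : SimpleGraph V}
    (hconn : G.Connected) {X : Set V} {u : V} (hu : u ∈ X)
    (hX : ∀ ⦃v w⦄, v ∈ X → G.Adj v w → w ∈ X) (v : V) : v ∈ X := by
  induction (reachable_iff_reflTransGen u v).mp (hconn u v) with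
  | refl => exact hu
  | tail _ hadj ih => exact hX ih hadj

theorem IsVC.not_adj_of_notMem {G : SimpleGraph V} {C : Set V} (hC : IsVC G C) {u w : V}
    (hu : u ∉ C) (hw : w ∉ C) : ¬ G.Adj u w :=
  fun h => (hC h).elim hu hw

theorem ClawFree.adj_or_adj {G : SimpleGraph V} (hclaw : ClawFree G) {v a b c : V}
    (hva : G.Adj v a) (hvb : G.Adj v b) (hvc : G.Adj v c) (hab : a ≠ b) (hnab : ¬ G.Adj a b)
    (hca : c ≠ a) (hcb : c ≠ b) : G.Adj c a ∨ G.Adj c b := by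
  by_contra! h
  exact hclaw ⟨v, a, b, c, hva, hvb, hvc, hab, hca.symm, hcb.symm, hnab,
    fun hac => h.1 hac.symm, fun hbc => h.2 hbc.symm⟩

theorem Forced.exists_adj_ne_not_forced {G : SimpleGraph V} {B : Set V} {c u : V}
    (hc : Forced G B c) (hcu : G.Adj c u) (hu : ¬ Forced G B u) :
    ∃ x, G.Adj c x ∧ x ≠ u ∧ ¬ Forced G B x := by
  by_contra! h
  exact hu (Forced.force c u hc hcu h)

theorem isZFS_of_forall_forced_of_mem_cover {G : SimpleGraph V} (hconn : G.Connected)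
    (hclaw : ClawFree G) {C B : Set V} (hC : IsVC G C) (hCB : ∀ c ∈ C, Forced G B c)
    {v : V} (hvB : v ∈ B) (hvC : v ∉ C) : IsZFS G B := by
  unfold IsZFS
  by_contra! ⟨b, hb⟩
  have hnotC : ∀ ⦃u⦄, ¬ Forced G B u → u ∉ C := fun u hu huC => hu (hCB u huC)
  let X : Set V := {w | ¬ Forced G B w ∨ (w ∈ C ∧ ∃ u, G.Adj w u ∧ ¬ Forced G B u)}
  have hX : ∀ ⦃w y⦄, w ∈ X → G.Adj w y → y ∈ X := by
    rintro w y (hw | ⟨hwC, u, hwu, hu⟩) hwy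
    · exact Or.inr ⟨(hC hwy).resolve_left (hnotC hw), w, hwy.symm, hw⟩
    by_cases hy : Forced G B y
    · obtain ⟨x, hwx, hxu, hx⟩ := (hCB w hwC).exists_adj_ne_not_forced hwu hu
      have hyux : G.Adj y u ∨ G.Adj y x :=
        hclaw.adj_or_adj hwu hwx hwy hxu.symm (hC.not_adj_of_notMem (hnotC hu) (hnotC hx))
          (fun h => hu (h ▸ hy)) (fun h => hx (h ▸ hy))
      rcases hyux with hyu | hyx
      · exact Or.inr ⟨(hC hyu).resolve_right (hnotC hu), u, hyu, hu⟩
      · exact Or.inr ⟨(hC hyx).resolve_right (hnotC hx), x, hyx, hx⟩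
    · exact Or.inl hy
  rcases hconn.forall_mem_of_adj_closed (X := X) (Or.inl hb) hX v with hv | ⟨hv, -⟩
  · exact hv (Forced.init v hvB)
  · exact hvC hv

theorem forced_insert_sdiff_of_mem {G : SimpleGraph V} {C : Set V} (hC : IsVC G C) {v c : V}
    (hvC : v ∉ C) (hvc : G.Adj v c) : ∀ x ∈ C, Forced G (insert v (C \ {c})) x := by
  intro x hx
  by_cases hxc : x = c
  · subst hxc
    refine Forced.force v x (Forced.init v (Set.mem_insert v _)) hvc fun y hvy hyx => ?_
    exact Forced.init y (Set.mem_insert_of_mem v ⟨(hC hvy).resolve_left hvC, hyx⟩)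
  · exact Forced.init x (Set.mem_insert_of_mem v ⟨hx, hxc⟩)

theorem stmt1_general {V : Type*} (G : SimpleGraph V)
    (hconn : G.Connected) (hclaw : ClawFree G)
    (hdeg : ∀ v : V, 1 ≤ degSet G v)
    (C : Set V) (hC : IsVC G C) (hCmin : C.ncard = vcNum G) :
    ∃ S : Set V, IsZFS G S ∧ S.ncard = C.ncard ∧ C.ncard = vcNum G ∧
      C.ncard - 1 ≤ (S ∩ C).ncard := by
  by_cases hCuniv : ∀ v, v ∈ C
  · refine ⟨C, fun v => Forced.init v (hCuniv v), rfl, hCmin, ?_⟩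
    rw [Set.inter_self]
    exact Nat.sub_le _ _
  push Not at hCuniv
  obtain ⟨v, hvC⟩ := hCuniv
  obtain ⟨c, hvc⟩ : (G.neighborSet v).Nonempty :=
    Set.nonempty_of_ncard_ne_zero (Nat.one_le_iff_ne_zero.mp (hdeg v))
  have hcC : c ∈ C := (hC hvc).resolve_left hvC
  have hSC : insert v (C \ {c}) ∩ C = C \ {c} := by
    rw [Set.insert_inter_of_notMem hvC, Set.inter_eq_left.mpr Set.sdiff_subset]
  refine ⟨insert v (C \ {c}), ?_, Set.ncard_exchange hvC hcC, hCmin, ?_⟩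
  · exact isZFS_of_forall_forced_of_mem_cover hconn hclaw hC
      (forced_insert_sdiff_of_mem hC hvC hvc) (Set.mem_insert v _) hvC
  · rw [hSC]
    exact Set.pred_ncard_le_ncard_sdiff_singleton C c

/-- For a connected claw-free graph with minimum degree at least one
and a minimum vertex cover `C`, there is a zero forcing set `S` with
`|S| = |C| = β(G)` and `|S ∩ C| ≥ |C| - 1`. -/
theorem stmt1 {V : Type*} [Fintype V] (G : SimpleGraph V)
    (hconn : G.Connected) (hclaw : ClawFree G)
    (hdeg : ∀ v : V, 1 ≤ degSet G v)
    (C : Set V) (hC : IsVC G C) (hCmin : C.ncard = vcNum G) :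
    ∃ S : Set V, IsZFS G S ∧ S.ncard = C.ncard ∧ C.ncard = vcNum G ∧
      C.ncard - 1 ≤ (S ∩ C).ncard :=
  stmt1_general G hconn hclaw hdeg C hC hCmin

end ZFPaper
end

section
/- If G is a connected simple graph with maximum degree Δ ≥ 3, then the zero forcing number of G satisfies Z(G) ≤ (Δ − 2)·β(G) + 1. -/
open SimpleGraph

namespace ZFPaper

variable {V : Type*} {W : Type*}

/-!
Induct on the size of a vertex cover `C`, which may be assumed minimal. Take `r ∈ C` and a
vertex `c ∈ C` farthest from `r`. Shortest walks from the rest of `C` to `r` avoid `c` and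
hence its pendant vertices, so deleting `c` together with its pendant vertices leaves a
connected graph covered by `C \ {c}`. A zero forcing set of that graph extends to one of `G`
by adding all but one pendant vertex `p₀` of `c`: a blue pendant vertex forces `c`, which forces
`p₀` once the rest of the graph is blue (with at most one pendant vertex, add `c` instead).
Since `c` also has a neighbour that is not pendant, this costs at most `Δ - 2` new vertices.
If `c = r`, then `C = {c}` and `G` is a star.
-/

section ZeroForcing

open Set

variable {G : SimpleGraph V}

def pendants (G : SimpleGraph V) (c : V) : Set V := {x | G.neighborSet x = {c}}

lemma adj_of_mem_pendants {c p : V} (hp : p ∈ pendants G c) : G.Adj p c := by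
  change c ∈ G.neighborSet p
  rw [hp]
  rfl

lemma eq_of_mem_pendants {c p x : V} (hp : p ∈ pendants G c) (hpx : G.Adj p x) : x = c := by
  change x ∈ G.neighborSet p at hpx
  rwa [hp] at hpx

lemma pendants_subset_neighborSet (c : V) : pendants G c ⊆ G.neighborSet c :=
  fun _ hp => (adj_of_mem_pendants hp).symm

lemma ncard_pendants_le_degSet [Finite V] (c : V) : (pendants G c).ncard ≤ degSet G c :=
  ncard_le_ncard (pendants_subset_neighborSet c)

lemma ncard_pendants_lt_degSet [Finite V] {c q : V} (hcq : G.Adj c q)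
    (hq : q ∉ pendants G c) : (pendants G c).ncard < degSet G c :=
  ncard_lt_ncard (ssubset_of_subset_not_subset (pendants_subset_neighborSet c)
    fun h => hq (h hcq))

lemma mem_pendants_of_forall_adj (hconn : G.Preconnected) {c v : V} (hvc : v ≠ c)
    (h : ∀ x, G.Adj v x → x = c) : v ∈ pendants G c := by
  obtain ⟨p⟩ := hconn v c
  cases p with
  | nil => exact absurd rfl hvc
  | cons hvx _ =>
    ext x
    exact ⟨h x, fun hx => hx ▸ h _ hvx ▸ hvx⟩

lemma exists_adj_notMem_pendants (hconn : G.Preconnected) {c r : V}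
    (hr : r ∉ insert c (pendants G c)) : ∃ q, G.Adj c q ∧ q ∉ pendants G c := by
  obtain ⟨⟨⟨x, q⟩, hxq⟩, -, hx, hq⟩ :=
    (hconn c r).some.exists_boundary_dart _ (mem_insert c _) hr
  obtain rfl | hxP := hx
  · exact ⟨q, hxq, fun h => hq (mem_insert_of_mem _ h)⟩
  · exact absurd (eq_of_mem_pendants hxP hxq ▸ mem_insert q _) hq

lemma Walk.support_subset_compl_pendants {c : V} :
    ∀ {u v : V} (p : G.Walk u v), u ∉ pendants G c → c ∉ p.support →
      ∀ x ∈ p.support, x ∈ (insert c (pendants G c))ᶜ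
  | _, _, .nil, hu, hc, x, hx => by
    simp only [Walk.support_nil, List.mem_singleton] at hc hx
    subst hx
    simp [hu, Ne.symm hc]
  | u, _, .cons huv q, hu, hc, x, hx => by
    rw [Walk.support_cons, List.mem_cons] at hx hc
    push Not at hc
    obtain rfl | hx := hx
    · simp [hu, Ne.symm hc.1]
    · refine Walk.support_subset_compl_pendants q (fun hv => ?_) hc.2 x hx
      exact hc.1 (eq_of_mem_pendants hv huv.symm).symm

lemma Walk.notMem_support_of_length_eq_dist {u v c : V} (p : G.Walk u v)
    (hp : p.length = G.dist u v) (huc : u ≠ c) (hreach : G.Reachable u c)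
    (hfar : G.dist v u ≤ G.dist v c) : c ∉ p.support := by
  classical
  intro hc
  have h₁ : G.dist u c ≤ (p.takeUntil c hc).length := dist_le _
  have h₂ : G.dist c v ≤ (p.dropUntil c hc).length := dist_le _
  have hsplit : (p.takeUntil c hc).length + (p.dropUntil c hc).length = p.length := by
    rw [← Walk.length_append, Walk.take_spec]
  have hpos : 0 < G.dist u c := hreach.pos_dist_of_ne huc
  rw [dist_comm] at hfar h₂
  omega

lemma connected_induce_compl_pendants (hconn : G.Connected) {C : Set V} (hC : IsVC G C)
    {r c : V} (hr : r ∈ C) (hrc : r ≠ c) (hCP : ∀ x ∈ C, x ∉ pendants G c)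
    (hfar : ∀ x ∈ C, G.dist r x ≤ G.dist r c) :
    (G.induce (insert c (pendants G c))ᶜ).Connected := by
  set S := (insert c (pendants G c))ᶜ
  have hwalk : ∀ v ∈ C, v ≠ c → ∃ p : G.Walk v r, ∀ x ∈ p.support, x ∈ S := by
    intro v hv hvc
    obtain ⟨p, hp⟩ := (hconn.preconnected v r).exists_walk_length_eq_dist
    exact ⟨p, Walk.support_subset_compl_pendants p (hCP v hv)
      (Walk.notMem_support_of_length_eq_dist p hp hvc (hconn.preconnected v c) (hfar v hv))⟩
  have hwalkS : ∀ v ∈ S, ∃ p : G.Walk v r, ∀ x ∈ p.support, x ∈ S := by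
    intro v hv
    simp only [S, mem_compl_iff, mem_insert_iff, not_or] at hv
    by_cases hvC : v ∈ C
    · exact hwalk v hvC hv.1
    obtain ⟨z, hvz, hzc⟩ : ∃ z, G.Adj v z ∧ z ≠ c := by
      by_contra! h
      exact hv.2 (mem_pendants_of_forall_adj hconn.preconnected hv.1 h)
    have hzC : z ∈ C := (hC hvz).resolve_left hvC
    obtain ⟨p, hp⟩ := hwalk z hzC hzc
    refine ⟨.cons hvz p, fun x hx => ?_⟩
    rw [Walk.support_cons, List.mem_cons] at hx
    obtain rfl | hx := hx
    · simpa [S] using hv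
    · exact hp x hx
  have hrS : r ∈ S := by simp [S, hrc, hCP r hr]
  refine induce_connected_of_patches r hrS fun {v} hv => ?_
  obtain ⟨p, hp⟩ := hwalkS v hv
  exact ⟨{x | x ∈ p.support}, hp, p.end_mem_support, p.start_mem_support,
    (p.connected_induce_support.preconnected _ _)⟩

lemma Forced.of_induce {S B : Set V} {B' : Set S} (hB' : ∀ b ∈ B', ↑b ∈ B)
    (hbdry : ∀ y ∈ S, ∀ x ∉ S, G.Adj y x → Forced G B x) {v : S}
    (hv : Forced (G.induce S) B' v) : Forced G B v := by
  induction hv with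
  | init v hv => exact .init _ (hB' v hv)
  | force u w _ huw _ ihu ihx =>
    refine .force u.1 w.1 ihu huw fun x hux hxw => ?_
    by_cases hx : x ∈ S
    · exact ihx ⟨x, hx⟩ hux fun h => hxw (congrArg Subtype.val h)
    · exact hbdry u u.2 x hx hux

lemma isZFS_of_induce_compl_pendants {c p₀ : V} {B : Set V}
    {B' : Set ↥(insert c (pendants G c))ᶜ} (hB' : IsZFS (G.induce _) B')
    (hB'B : ∀ b ∈ B', ↑b ∈ B) (hc : Forced G B c) (hP : pendants G c \ {p₀} ⊆ B) :
    IsZFS G B := by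
  have hS : ∀ x ∉ insert c (pendants G c), Forced G B x := by
    refine fun x hx => Forced.of_induce hB'B (fun y hy z hz hyz => ?_) (hB' ⟨x, hx⟩)
    obtain rfl | hzP := mem_insert_iff.mp (not_not.mp hz)
    · exact hc
    · exact (hy (by rw [eq_of_mem_pendants hzP hyz.symm]; exact mem_insert _ _)).elim
  have hother : ∀ x, x ≠ c → (x ∈ pendants G c → x ≠ p₀) → Forced G B x := by
    intro x hxc hx₀
    by_cases hxP : x ∈ pendants G c
    · exact .init _ (hP ⟨hxP, hx₀ hxP⟩)
    · exact hS x (by simp [hxc, hxP])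
  intro v
  by_cases hvc : v = c
  · exact hvc ▸ hc
  by_cases hv : v ∈ pendants G c ∧ v = p₀
  · obtain ⟨hvP, rfl⟩ := hv
    exact .force c v hc (adj_of_mem_pendants hvP).symm fun x hcx hxv =>
      hother x hcx.ne' fun _ => hxv
  · exact hother v hvc fun hvP hv₀ => hv ⟨hvP, hv₀⟩

lemma exists_isZFS_of_induce_compl_pendants [Finite V] (c : V)
    {B' : Set ↥(insert c (pendants G c))ᶜ} (hB' : IsZFS (G.induce _) B') :
    ∃ B : Set V, IsZFS G B ∧ B.ncard ≤ B'.ncard + max 1 ((pendants G c).ncard - 1) := by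
  have hB'card : (Subtype.val '' B').ncard = B'.ncard :=
    ncard_image_of_injective _ Subtype.val_injective
  have hB'B (T : Set V) : ∀ b ∈ B', ↑b ∈ Subtype.val '' B' ∪ T :=
    fun b hb => Or.inl ⟨b, hb, rfl⟩
  by_cases hPn : (pendants G c).Nontrivial
  · obtain ⟨p₀, hp₀, p₁, hp₁, hp₁₀⟩ := hPn
    refine ⟨Subtype.val '' B' ∪ (pendants G c \ {p₀}), ?_, ?_⟩
    · refine isZFS_of_induce_compl_pendants hB' (hB'B _) ?_ subset_union_right
      exact .force p₁ c (.init _ (Or.inr ⟨hp₁, hp₁₀.symm⟩)) (adj_of_mem_pendants hp₁)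
        fun x hp₁x hxc => absurd (eq_of_mem_pendants hp₁ hp₁x) hxc
    · have := ncard_union_le (Subtype.val '' B') (pendants G c \ {p₀})
      have := ncard_sdiff_singleton_of_mem hp₀
      omega
  · obtain ⟨p₀, hp₀⟩ : ∃ p₀, pendants G c ⊆ {p₀} := by
      rcases (not_nontrivial_iff.mp hPn).eq_empty_or_singleton with h | ⟨p, h⟩
      · exact ⟨c, h ▸ empty_subset _⟩
      · exact ⟨p, h.le⟩
    refine ⟨Subtype.val '' B' ∪ {c}, ?_, ?_⟩
    · exact isZFS_of_induce_compl_pendants hB' (hB'B _) (.init _ (Or.inr rfl))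
        fun p hp => absurd (hp₀ hp.1) hp.2
    · have := ncard_union_le (Subtype.val '' B') {c}
      rw [ncard_singleton] at this
      omega

lemma IsVC.induce {C : Set V} (hC : IsVC G C) (S : Set V) :
    IsVC (G.induce S) (Subtype.val ⁻¹' C) :=
  fun _ _ h => hC h

lemma IsVC.exists_adj_notMem {C : Set V} (hC : IsVC G C) {x : V} (hx : x ∈ C)
    (hmin : ¬ IsVC G (C \ {x})) : ∃ y, G.Adj x y ∧ y ∉ C := by
  simp only [IsVC, not_forall] at hmin
  obtain ⟨u, w, huw, h⟩ := hmin
  simp only [mem_sdiff, mem_singleton_iff, not_or, not_and, not_not] at h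
  rcases hC huw with hu | hw
  · obtain rfl := h.1 hu
    exact ⟨w, huw, fun hw => huw.ne (h.2 hw).symm⟩
  · obtain rfl := h.2 hw
    exact ⟨u, huw.symm, fun hu => huw.ne (h.1 hu)⟩

lemma subsingleton_of_isVC_empty (hconn : G.Preconnected) (hC : IsVC G ∅) : Subsingleton V := by
  refine ⟨fun u v => ?_⟩
  obtain ⟨p⟩ := hconn u v
  cases p with
  | nil => rfl
  | cons huw _ => simpa using hC huw

lemma mem_pendants_of_isVC_singleton (hconn : G.Preconnected) {c v : V} (hC : IsVC G {c})
    (hvc : v ≠ c) : v ∈ pendants G c :=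
  mem_pendants_of_forall_adj hconn hvc fun _ hvx => (hC hvx).resolve_left hvc

lemma exists_isZFS_ncard_le_of_isVC_singleton [Finite V] (hconn : G.Preconnected) {c : V}
    (hC : IsVC G {c}) : ∃ B : Set V, IsZFS G B ∧ B.ncard ≤ max 1 (degSet G c - 1) := by
  have hS : IsZFS (G.induce (insert c (pendants G c))ᶜ) ∅ := fun ⟨v, hv⟩ =>
    (hv (mem_insert_of_mem _ (mem_pendants_of_isVC_singleton hconn hC
      fun h => hv (h ▸ mem_insert _ _)))).elim
  obtain ⟨B, hB, hBcard⟩ := exists_isZFS_of_induce_compl_pendants c hS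
  have := ncard_pendants_le_degSet (G := G) c
  rw [ncard_empty] at hBcard
  exact ⟨B, hB, by omega⟩

lemma ncard_preimage_val_lt [Finite V] {C S : Set V} {c : V} (hc : c ∈ C) (hcS : c ∉ S) :
    (Subtype.val ⁻¹' C : Set S).ncard < C.ncard :=
  (ncard_le_ncard_of_injOn Subtype.val (t := C \ {c})
    (fun x hx => ⟨hx, fun h => hcS (mem_singleton_iff.mp h ▸ x.2)⟩)
    Subtype.val_injective.injOn).trans_lt (ncard_sdiff_singleton_lt_of_mem hc)

lemma degSet_induce_le [Finite V] (S : Set V) (v : S) : degSet (G.induce S) v ≤ degSet G v :=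
  ncard_le_ncard_of_injOn Subtype.val (fun _ h => h) Subtype.val_injective.injOn

theorem exists_isZFS_ncard_le [Finite V] {m : ℕ} (hm : 3 ≤ m) (hconn : G.Connected)
    (hdeg : ∀ v, degSet G v ≤ m) {C : Set V} (hC : IsVC G C) :
    ∃ B : Set V, IsZFS G B ∧ B.ncard ≤ (m - 2) * C.ncard + 1 := by
  induction hn : C.ncard using Nat.strong_induction_on generalizing V with
  | _ n ih =>
  subst hn
  obtain rfl | ⟨r, hr⟩ := C.eq_empty_or_nonempty
  · have := subsingleton_of_isVC_empty hconn.preconnected hC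
    obtain ⟨v⟩ := hconn.nonempty
    exact ⟨{v}, fun w => .init _ (Subsingleton.elim w v), by simp⟩
  by_cases hred : ∃ x ∈ C, IsVC G (C \ {x})
  · obtain ⟨x, hx, hCx⟩ := hred
    obtain ⟨B, hB, hBcard⟩ := ih _ (ncard_sdiff_singleton_lt_of_mem hx) hconn hdeg hCx rfl
    have hCx_le : (C \ {x}).ncard ≤ C.ncard := ncard_le_ncard sdiff_subset
    exact ⟨B, hB, hBcard.trans (by gcongr)⟩
  push Not at hred
  obtain ⟨c, hc, hfar⟩ := C.exists_max_image (G.dist r) C.toFinite ⟨r, hr⟩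
  have hCP : ∀ x ∈ C, x ∉ pendants G c := fun x hx hxP => by
    obtain ⟨y, hxy, hy⟩ := hC.exists_adj_notMem hx (hred x hx)
    exact hy (eq_of_mem_pendants hxP hxy ▸ hc)
  have hdegc := hdeg c
  obtain rfl | hrc := eq_or_ne r c
  · have hCr : C = {r} := eq_singleton_iff_unique_mem.mpr ⟨hr, fun x hx =>
      ((hconn.preconnected r x).dist_eq_zero_iff.mp (by simpa using hfar x hx)).symm⟩
    obtain ⟨B, hB, hBcard⟩ :=
      exists_isZFS_ncard_le_of_isVC_singleton hconn.preconnected (hCr ▸ hC)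
    rw [hCr, ncard_singleton]
    exact ⟨B, hB, by omega⟩
  · set S := (insert c (pendants G c))ᶜ
    have hC' := ncard_preimage_val_lt (S := S) hc fun h => h (mem_insert _ _)
    obtain ⟨B', hB', hB'card⟩ := ih _ hC'
      (connected_induce_compl_pendants hconn hC hr hrc hCP hfar)
      (fun v => (degSet_induce_le S v).trans (hdeg v)) (hC.induce S) rfl
    obtain ⟨B, hB, hBcard⟩ := exists_isZFS_of_induce_compl_pendants c hB'
    obtain ⟨q, hcq, hq⟩ := exists_adj_notMem_pendants hconn.preconnected (c := c) (r := r)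
      (by simp [hrc, hCP r hr])
    have hP := ncard_pendants_lt_degSet hcq hq
    have hmul : (m - 2) * (Subtype.val ⁻¹' C : Set S).ncard + (m - 2) ≤ (m - 2) * C.ncard := by
      rw [← Nat.mul_succ]
      exact Nat.mul_le_mul_left _ hC'
    exact ⟨B, hB, by omega⟩

lemma degSet_le_maxDeg [Finite V] (G : SimpleGraph V) (v : V) : degSet G v ≤ maxDeg G :=
  le_csSup (finite_range (degSet G)).bddAbove ⟨v, rfl⟩

lemma exists_isVC_ncard_eq_vcNum (G : SimpleGraph V) : ∃ C, IsVC G C ∧ C.ncard = vcNum G :=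
  Nat.sInf_mem (s := {m | ∃ C, IsVC G C ∧ C.ncard = m})
    ⟨_, univ, fun _ _ _ => Or.inl trivial, rfl⟩

lemma zfNum_le_ncard {B : Set V} (hB : IsZFS G B) : zfNum G ≤ B.ncard :=
  Nat.sInf_le ⟨B, hB, rfl⟩

end ZeroForcing

/-- For a connected graph with maximum degree `Δ ≥ 3`,
`Z(G) ≤ (Δ - 2)·β(G) + 1`. -/
theorem stmt2 {V : Type*} [Fintype V] (G : SimpleGraph V)
    (hconn : G.Connected) (hdelta : 3 ≤ maxDeg G) :
    zfNum G ≤ (maxDeg G - 2) * vcNum G + 1 := by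
  obtain ⟨C, hC, hCcard⟩ := exists_isVC_ncard_eq_vcNum G
  obtain ⟨B, hB, hBcard⟩ := exists_isZFS_ncard_le hdelta hconn (degSet_le_maxDeg G) hC
  exact (zfNum_le_ncard hB).trans (hCcard ▸ hBcard)

end ZFPaper
end

section
/- Let k ≥ 3, let C_k be a cycle with vertices v_1, …, v_k, and let G be the graph obtained by taking disjoint complete graphs K_{n_1}, …, K_{n_k} with each n_i ≥ 1 and, for each i = 1, …, k, joining every vertex of K_{n_i} to both v_i and v_{i+1} (indices modulo k). Then the independence number of G satisfies α(G) = k. -/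
open SimpleGraph

namespace ZFPaper

variable {V : Type*} {W : Type*}

/-!
Each cycle vertex `v_i` together with the clique `K_{n_i}` forms a clique, and these `k` cliques
partition the vertex set, so an independent set has at most `k` vertices. Conversely, one vertex
from each `K_{n_i}` gives an independent set of size `k`, since distinct attached cliques are
never adjacent.
-/

theorem indepNum_eq_of_isIndep_of_ncard_le {G : SimpleGraph V} {m : ℕ} {S : Set V}
    (hS : IsIndep G S) (hSm : S.ncard = m) (hle : ∀ T, IsIndep G T → T.ncard ≤ m) :
    indepNum G = m := by
  have hmem : m ∈ {m : ℕ | ∃ S : Set V, IsIndep G S ∧ S.ncard = m} := ⟨S, hS, hSm⟩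
  have hbound : ∀ j ∈ {m : ℕ | ∃ S : Set V, IsIndep G S ∧ S.ncard = m}, j ≤ m := by
    rintro _ ⟨T, hT, rfl⟩
    exact hle T hT
  exact le_antisymm (csSup_le ⟨m, hmem⟩ hbound) (le_csSup ⟨m, hbound⟩ hmem)

theorem IsIndep.ncard_le_of_fibers_clique [Finite W] {G : SimpleGraph V} {S : Set V}
    (hS : IsIndep G S) (f : V → W) (hf : ∀ u v, u ≠ v → f u = f v → G.Adj u v) :
    S.ncard ≤ Nat.card W := by
  have hinj : Set.InjOn f S := fun u hu v hv huv => by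
    by_contra hne
    exact hS hu hv (hf u v hne huv)
  calc S.ncard = (f '' S).ncard := hinj.ncard_image.symm
    _ ≤ (Set.univ : Set W).ncard := Set.ncard_le_ncard (Set.subset_univ _)
    _ = Nat.card W := Set.ncard_univ W

namespace cycleCliques

variable {k : ℕ} {n : Fin k → ℕ}

def proj : Fin k ⊕ (Σ i : Fin k, Fin (n i)) → Fin k
  | Sum.inl i => i
  | Sum.inr s => s.1

theorem adj_of_proj_eq :
    ∀ u v : Fin k ⊕ (Σ i : Fin k, Fin (n i)), u ≠ v → proj u = proj v →
      (cycleCliques k n).Adj u v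
  | Sum.inl _, Sum.inl _, hne, h => absurd (congrArg Sum.inl h) hne
  | Sum.inl _, Sum.inr _, _, h => Or.inl (congrArg Fin.val h)
  | Sum.inr _, Sum.inl _, _, h => Or.inl (congrArg Fin.val h.symm)
  | Sum.inr _, Sum.inr _, hne, h => ⟨fun hst => hne (congrArg Sum.inr hst), h⟩

def transversal (hn : ∀ i, 1 ≤ n i) : Set (Fin k ⊕ (Σ i : Fin k, Fin (n i))) :=
  Set.range fun i => Sum.inr ⟨i, ⟨0, hn i⟩⟩

theorem isIndep_transversal (hn : ∀ i, 1 ≤ n i) :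
    IsIndep (cycleCliques k n) (transversal hn) := by
  rintro _ ⟨i, rfl⟩ _ ⟨j, rfl⟩ ⟨hne, hij⟩
  obtain rfl : i = j := hij
  exact hne rfl

theorem ncard_transversal (hn : ∀ i, 1 ≤ n i) : (transversal hn).ncard = k := by
  rw [transversal,
    Set.ncard_range_of_injective fun _ _ h => congrArg Sigma.fst (Sum.inr_injective h),
    Nat.card_fin]

end cycleCliques

theorem stmt14_general (k : ℕ) (n : Fin k → ℕ) (hn : ∀ i, 1 ≤ n i) :
    indepNum (cycleCliques k n) = k :=
  indepNum_eq_of_isIndep_of_ncard_le (cycleCliques.isIndep_transversal hn)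
    (cycleCliques.ncard_transversal hn) fun _ hT =>
      (hT.ncard_le_of_fibers_clique cycleCliques.proj cycleCliques.adj_of_proj_eq).trans_eq
        (Nat.card_fin k)

/-- For `k ≥ 3` and cliques of sizes `n i ≥ 1` attached along a cycle `C_k`,
the independence number of the resulting graph is `k`. -/
theorem stmt14 (k : ℕ) (hk : 3 ≤ k) (n : Fin k → ℕ) (hn : ∀ i, 1 ≤ n i) :
    indepNum (cycleCliques k n) = k :=
  stmt14_general k n hn

end ZFPaper
end

section
/- Let k ≥ 3 and let G be the graph obtained from a cycle C_k with vertices v_1, …, v_k by taking k disjoint copies of K_2 and, for each i = 1, …, k, joining both vertices of the i-th copy of K_2 to v_i and v_{i+1} (indices modulo k). Then G has n = 3k vertices, maximum degree Δ = 6, minimum degree δ = 3, and satisfies Z(G) = β(G) = 2k, which is strictly less than ((Δ − 2)n − (Δ − δ) + 2)/(Δ − 1) = (12k − 1)/5. -/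
/-!
The sets `Q i = {v_i, v_{i+1}} ∪ K^(i)` are `k` cliques covering every edge. When a vertex `v` is
forced by `u`, some `Q i` contains both, hence lies in the closed neighbourhood of `u`, so `v` is
the last vertex of `Q i` to turn blue; distinct forced vertices are therefore last in distinct
cliques, at most `k` vertices are forced, and `Z ≥ n - k`. Similarly the complement of a vertex
cover is independent and meets each `Q i` at most once, so `β ≥ n - k`. Removing one vertex from
each `K^(i)` attains both bounds: the other vertex of `K^(i)` forces it, and the removed vertices
are pairwise non-adjacent.
-/

open SimpleGraph

namespace ZFPaper

variable {V : Type*} {W : Type*}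

section ZeroForcing

open Filter

variable {G : SimpleGraph V} {B : Set V}

def forcedWithin (G : SimpleGraph V) (B : Set V) : ℕ → Set V
  | 0 => B
  | n + 1 => forcedWithin G B n ∪
      {w | ∃ u ∈ forcedWithin G B n, G.Adj u w ∧
        ∀ x, G.Adj u x → x ≠ w → x ∈ forcedWithin G B n}

lemma monotone_forcedWithin : Monotone (forcedWithin G B) :=
  monotone_nat_of_le_succ fun _ => Set.subset_union_left

lemma Forced.eventually_mem_forcedWithin [Finite V] {v : V} (h : Forced G B v) :
    ∀ᶠ n in atTop, v ∈ forcedWithin G B n := by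
  induction h with
  | init v hv => exact .of_forall fun n => monotone_forcedWithin (Nat.zero_le n) hv
  | force u w _ hadj _ ihu ihx =>
    have hx : ∀ᶠ n in atTop, ∀ x, G.Adj u x → x ≠ w → x ∈ forcedWithin G B n := by
      refine eventually_all.2 fun x => ?_
      by_cases hx : G.Adj u x ∧ x ≠ w
      · exact (ihx x hx.1 hx.2).mono fun _ h _ _ => h
      · exact .of_forall fun _ h1 h2 => absurd ⟨h1, h2⟩ hx
    obtain ⟨N, hN⟩ := (ihu.and hx).exists
    exact eventually_atTop.2
      ⟨N + 1, fun m hm => monotone_forcedWithin hm (Or.inr ⟨u, hN.1, hadj, hN.2⟩)⟩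

noncomputable def forcingTime (G : SimpleGraph V) (B : Set V) (v : V) : ℕ :=
  sInf {n | v ∈ forcedWithin G B n}

lemma forcingTime_le {v : V} {n : ℕ} (h : v ∈ forcedWithin G B n) : forcingTime G B v ≤ n :=
  Nat.sInf_le h

lemma IsZFS.exists_forcer [Finite V] (hB : IsZFS G B) {v : V} (hv : v ∉ B) :
    ∃ u, G.Adj u v ∧ forcingTime G B u < forcingTime G B v ∧
      ∀ x, G.Adj u x → x ≠ v → forcingTime G B x < forcingTime G B v := by
  have hmem : v ∈ forcedWithin G B (forcingTime G B v) :=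
    Nat.sInf_mem (hB v).eventually_mem_forcedWithin.exists
  obtain ⟨m, hm⟩ : ∃ m, forcingTime G B v = m + 1 :=
    Nat.exists_eq_succ_of_ne_zero fun h => hv (by rwa [h] at hmem)
  rw [hm] at hmem ⊢
  rcases hmem with hmem | ⟨u, hu, hadj, hx⟩
  · exact absurd (forcingTime_le hmem) (by omega)
  · exact ⟨u, hadj, Nat.lt_succ_of_le (forcingTime_le hu),
      fun x hux hxv => Nat.lt_succ_of_le (forcingTime_le (hx x hux hxv))⟩

variable {ι : Type*} [Finite ι] {Q : ι → Set V}

lemma IsZFS.card_sub_card_le_ncard [Finite V] (hQ : ∀ i, G.IsClique (Q i))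
    (hcover : ∀ ⦃u v⦄, G.Adj u v → ∃ i, u ∈ Q i ∧ v ∈ Q i) (hB : IsZFS G B) :
    Nat.card V - Nat.card ι ≤ B.ncard := by
  have latest : ∀ v : ↥Bᶜ, ∃ i, v.1 ∈ Q i ∧
      ∀ x ∈ Q i, x ≠ v → forcingTime G B x < forcingTime G B v := by
    rintro ⟨v, hv⟩
    obtain ⟨u, hadj, hu, hx⟩ := hB.exists_forcer hv
    obtain ⟨i, hui, hvi⟩ := hcover hadj
    refine ⟨i, hvi, fun x hxi hxv => ?_⟩
    rcases eq_or_ne u x with rfl | hux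
    · exact hu
    · exact hx x (hQ i hui hxi hux) hxv
  choose f hf using latest
  have hinj : Function.Injective f := fun v w hvw => Subtype.ext <| by
    by_contra hne
    have hwv := (hf v).2 w (hvw ▸ (hf w).1) (Ne.symm hne)
    have hvw' := (hf w).2 v (hvw ▸ (hf v).1) hne
    omega
  have hcompl : Bᶜ.ncard ≤ Nat.card ι := Nat.card_le_card_of_injective f hinj
  have := Set.ncard_add_ncard_compl B
  omega

lemma IsVC.card_sub_card_le_ncard [Finite V] (hQ : ∀ i, G.IsClique (Q i))
    (hcover : ∀ v, ∃ i, v ∈ Q i) {C : Set V} (hC : IsVC G C) :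
    Nat.card V - Nat.card ι ≤ C.ncard := by
  choose f hf using hcover
  have hinj : Set.InjOn f Cᶜ := fun v hv w hw hvw => by
    by_contra hne
    exact (hC (hQ (f v) (hf v) (hvw ▸ hf w) hne)).elim hv hw
  have hcompl := Set.ncard_le_ncard_of_injOn f (fun _ _ => Set.mem_univ _) hinj
  have := Set.ncard_add_ncard_compl C
  rw [Set.ncard_univ] at hcompl
  omega

lemma isZFS_of_forall_notMem
    (h : ∀ w ∉ B, ∃ u ∈ B, G.Adj u w ∧ ∀ x, G.Adj u x → x ≠ w → x ∈ B) :
    IsZFS G B := by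
  intro w
  by_cases hw : w ∈ B
  · exact .init w hw
  · obtain ⟨u, hu, hadj, hx⟩ := h w hw
    exact .force u w (.init u hu) hadj fun x hux hxw => .init x (hx x hux hxw)

end ZeroForcing

section CycleCliques

open Sum

variable {k : ℕ} {n : Fin k → ℕ}

lemma cycleCliques_adj_inr_inr {s t : Σ i : Fin k, Fin (n i)} :
    (cycleCliques k n).Adj (inr s) (inr t) ↔ s ≠ t ∧ s.1 = t.1 := Iff.rfl

/-- The clique `{v_i, v_{i+1}} ∪ K^(i)`, with membership phrased exactly as adjacency in
`cycleCliques`. -/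
def cycleBlock (k : ℕ) (n : Fin k → ℕ) (i : Fin k) :
    Set (Fin k ⊕ Σ i : Fin k, Fin (n i)) :=
  Sum.elim (fun j => (j : ℕ) = i ∨ (j : ℕ) = ((i : ℕ) + 1) % k) (fun s => s.1 = i)

@[simp] lemma inl_mem_cycleBlock {i j : Fin k} :
    inl j ∈ cycleBlock k n i ↔ (j : ℕ) = i ∨ (j : ℕ) = ((i : ℕ) + 1) % k := Iff.rfl

@[simp] lemma inr_mem_cycleBlock {i : Fin k} {s : Σ i : Fin k, Fin (n i)} :
    inr s ∈ cycleBlock k n i ↔ s.1 = i := Iff.rfl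

lemma isClique_cycleBlock (i : Fin k) : (cycleCliques k n).IsClique (cycleBlock k n i) := by
  rintro (a | s) ha (b | t) hb hab
  · simp only [inl_mem_cycleBlock, ne_eq, inl.injEq] at ha hb hab
    refine ⟨hab, ?_⟩
    rcases ha with ha | ha <;> rcases hb with hb | hb
    · exact absurd (Fin.ext (ha.trans hb.symm)) hab
    · exact Or.inl (ha ▸ hb)
    · exact Or.inr (hb ▸ ha)
    · exact absurd (Fin.ext (ha.trans hb.symm)) hab
  · simp only [inl_mem_cycleBlock, inr_mem_cycleBlock] at ha hb
    subst hb
    exact ha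
  · simp only [inl_mem_cycleBlock, inr_mem_cycleBlock] at ha hb
    subst ha
    exact hb
  · simp only [inr_mem_cycleBlock, ne_eq, inr.injEq] at ha hb hab
    exact ⟨hab, ha.trans hb.symm⟩

lemma exists_cycleBlock_of_adj ⦃u v : Fin k ⊕ Σ i : Fin k, Fin (n i)⦄
    (h : (cycleCliques k n).Adj u v) :
    ∃ i, u ∈ cycleBlock k n i ∧ v ∈ cycleBlock k n i := by
  rcases u with a | s <;> rcases v with b | t
  · rcases h.2 with h | h
    exacts [⟨a, Or.inl rfl, Or.inr h⟩, ⟨b, Or.inr h, Or.inl rfl⟩]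
  · exact ⟨t.1, (h : _), rfl⟩
  · exact ⟨s.1, rfl, (h : _)⟩
  · exact ⟨s.1, rfl, h.2.symm⟩

lemma exists_cycleBlock (v : Fin k ⊕ Σ i : Fin k, Fin (n i)) :
    ∃ i, v ∈ cycleBlock k n i := by
  rcases v with j | s
  exacts [⟨j, Or.inl rfl⟩, ⟨s.1, rfl⟩]

def cliqueHeads (k : ℕ) (n : Fin k → ℕ) : Set (Fin k ⊕ Σ i : Fin k, Fin (n i)) :=
  Sum.elim (fun _ => False) (fun s => (s.2 : ℕ) = 0)

@[simp] lemma inl_notMem_cliqueHeads {j : Fin k} : inl j ∉ cliqueHeads k n := id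

@[simp] lemma inr_mem_cliqueHeads {s : Σ i : Fin k, Fin (n i)} :
    inr s ∈ cliqueHeads k n ↔ (s.2 : ℕ) = 0 := Iff.rfl

lemma ncard_compl_cliqueHeads (hn : ∀ i, 1 ≤ n i) :
    (cliqueHeads k n)ᶜ.ncard = Nat.card (Fin k ⊕ Σ i : Fin k, Fin (n i)) - k := by
  have hrange : cliqueHeads k n = Set.range fun i => inr ⟨i, ⟨0, hn i⟩⟩ := by
    ext (j | ⟨i, a⟩)
    · simp
    · refine ⟨fun ha => ⟨i, congrArg (inr ∘ Sigma.mk i) (Fin.ext ha.symm)⟩, ?_⟩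
      rintro ⟨i', hi'⟩
      cases hi'
      rfl
  have hinj :
      Function.Injective fun i => (inr ⟨i, ⟨0, hn i⟩⟩ : Fin k ⊕ Σ i, Fin (n i)) :=
    fun _ _ h => congrArg Sigma.fst (inr_injective h)
  have hcard : (cliqueHeads k n).ncard = k := by
    rw [hrange, Set.ncard_range_of_injective hinj, Nat.card_eq_fintype_card, Fintype.card_fin]
  have := Set.ncard_add_ncard_compl (cliqueHeads k n)
  omega

lemma isVC_compl_cliqueHeads : IsVC (cycleCliques k n) (cliqueHeads k n)ᶜ := by
  rintro (a | ⟨i, a⟩) (b | ⟨i', b⟩) h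
  · exact Or.inl inl_notMem_cliqueHeads
  · exact Or.inl inl_notMem_cliqueHeads
  · exact Or.inr inl_notMem_cliqueHeads
  obtain ⟨hne, rfl⟩ := h
  by_contra! hmem
  simp only [Set.mem_compl_iff, not_not, inr_mem_cliqueHeads] at hmem
  exact hne (congrArg _ (Fin.ext (hmem.1.trans hmem.2.symm)))

lemma isZFS_compl_cliqueHeads (hn : ∀ i, 2 ≤ n i) :
    IsZFS (cycleCliques k n) (cliqueHeads k n)ᶜ := by
  refine isZFS_of_forall_notMem ?_
  rintro (j | ⟨i, a⟩) hw
  · exact absurd inl_notMem_cliqueHeads hw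
  simp only [Set.mem_compl_iff, not_not, inr_mem_cliqueHeads] at hw
  refine ⟨inr ⟨i, ⟨1, hn i⟩⟩, one_ne_zero, ⟨fun h => ?_, rfl⟩, ?_⟩
  · cases h
    exact one_ne_zero hw
  · rintro (j | ⟨i', b⟩) hadj hne
    · exact inl_notMem_cliqueHeads
    obtain ⟨-, rfl⟩ := hadj
    exact fun hb => hne (congrArg (inr ∘ Sigma.mk _) (Fin.ext (hb.trans hw.symm)))

lemma zfNum_cycleCliques (hn : ∀ i, 2 ≤ n i) :
    zfNum (cycleCliques k n) = Nat.card (Fin k ⊕ Σ i : Fin k, Fin (n i)) - k := by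
  refine IsLeast.csInf_eq ⟨⟨_, isZFS_compl_cliqueHeads hn,
    ncard_compl_cliqueHeads fun i => one_le_two.trans (hn i)⟩, ?_⟩
  rintro m ⟨B, hB, rfl⟩
  simpa using hB.card_sub_card_le_ncard isClique_cycleBlock exists_cycleBlock_of_adj

lemma vcNum_cycleCliques (hn : ∀ i, 1 ≤ n i) :
    vcNum (cycleCliques k n) = Nat.card (Fin k ⊕ Σ i : Fin k, Fin (n i)) - k := by
  refine IsLeast.csInf_eq ⟨⟨_, isVC_compl_cliqueHeads, ncard_compl_cliqueHeads hn⟩, ?_⟩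
  rintro m ⟨C, hC, rfl⟩
  simpa using hC.card_sub_card_le_ncard isClique_cycleBlock exists_cycleBlock

end CycleCliques

section Degrees

open Sum Fin.CommRing

variable {k : ℕ} [NeZero k]

lemma Fin.val_eq_add_one_mod_iff {i j : Fin k} : (j : ℕ) = ((i : ℕ) + 1) % k ↔ j = i + 1 := by
  rw [Fin.ext_iff, Fin.val_add, Fin.val_one', Nat.add_mod_mod]

lemma Fin.add_one_ne_self (hk : 2 ≤ k) (i : Fin k) : i + 1 ≠ i := by
  have : Nontrivial (Fin k) := Fin.nontrivial_iff_two_le.2 hk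
  exact fun h => one_ne_zero (add_eq_left.1 h)

lemma Fin.add_one_ne_sub_one (hk : 3 ≤ k) (i : Fin k) : i + 1 ≠ i - 1 := by
  intro h
  have h2 : (2 : Fin k) = 0 := by linear_combination h
  have := congrArg Fin.val h2
  simp [Nat.mod_eq_of_lt (show 2 < k by omega)] at this

variable {n : Fin k → ℕ}

lemma cycleCliques_adj_inl_inl (hk : 2 ≤ k) {i j : Fin k} :
    (cycleCliques k n).Adj (inl i) (inl j) ↔ j = i + 1 ∨ i = j + 1 := by
  change i ≠ j ∧ ((j : ℕ) = ((i : ℕ) + 1) % k ∨ (i : ℕ) = ((j : ℕ) + 1) % k) ↔ _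
  rw [Fin.val_eq_add_one_mod_iff, Fin.val_eq_add_one_mod_iff, and_iff_right_iff_imp]
  rintro (rfl | rfl)
  exacts [(Fin.add_one_ne_self hk i).symm, Fin.add_one_ne_self hk j]

lemma cycleCliques_adj_inl_inr {j : Fin k} {s : Σ i : Fin k, Fin (n i)} :
    (cycleCliques k n).Adj (inl j) (inr s) ↔ j = s.1 ∨ j = s.1 + 1 := by
  change (j : ℕ) = s.1 ∨ (j : ℕ) = ((s.1 : ℕ) + 1) % k ↔ _
  rw [Fin.val_eq_add_one_mod_iff, Fin.val_inj]

lemma neighborSet_inr (i : Fin k) (a : Fin 2) :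
    (cycleCliques k fun _ => 2).neighborSet (inr ⟨i, a⟩) =
      {inl i, inl (i + 1), inr ⟨i, a + 1⟩} := by
  ext (j | ⟨i', b⟩)
  · simp [adj_comm, cycleCliques_adj_inl_inr]
  · have hb : b ≠ a ↔ b = a + 1 := by revert a b; decide
    simp only [mem_neighborSet, cycleCliques_adj_inr_inr, Set.mem_insert_iff,
      Set.mem_singleton_iff, reduceCtorEq, inr.injEq, false_or, Sigma.mk.injEq, heq_eq_eq]
    constructor
    · rintro ⟨hne, rfl⟩
      exact ⟨rfl, hb.1 fun h => hne (by rw [h])⟩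
    · rintro ⟨rfl, rfl⟩
      exact ⟨fun h => hb.2 rfl (eq_of_heq (Sigma.mk.inj_iff.1 h).2).symm, rfl⟩

lemma neighborSet_inl (hk : 3 ≤ k) (j : Fin k) :
    (cycleCliques k fun _ => 2).neighborSet (inl j) =
      {inl (j + 1), inl (j - 1), inr ⟨j, 0⟩, inr ⟨j, 1⟩,
        inr ⟨j - 1, 0⟩, inr ⟨j - 1, 1⟩} := by
  ext (m | ⟨i, b⟩)
  · simp [cycleCliques_adj_inl_inl (by omega : 2 ≤ k), eq_sub_iff_add_eq, eq_comm]
  · have hb : b = 0 ∨ b = 1 := by revert b; decide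
    rcases hb with rfl | rfl <;> simp [cycleCliques_adj_inl_inr, eq_sub_iff_add_eq, eq_comm]

lemma degSet_inr (hk : 2 ≤ k) (i : Fin k) (a : Fin 2) :
    degSet (cycleCliques k fun _ => 2) (inr ⟨i, a⟩) = 3 := by
  rw [degSet, neighborSet_inr, Set.ncard_eq_three]
  exact ⟨_, _, _, by simp [(Fin.add_one_ne_self hk i).symm], by simp, by simp, rfl⟩

lemma degSet_inl (hk : 3 ≤ k) (j : Fin k) :
    degSet (cycleCliques k fun _ => 2) (inl j) = 6 := by
  have h1 := Fin.add_one_ne_sub_one hk j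
  have h2 : j ≠ j - 1 := fun h => Fin.add_one_ne_self (by omega) (j - 1) (by rwa [sub_add_cancel])
  rw [degSet, neighborSet_inl hk]
  repeat rw [Set.ncard_insert_of_notMem (by simp [h1, h2])]
  rw [Set.ncard_singleton]

lemma maxDeg_cycleCliques_two (hk : 3 ≤ k) : maxDeg (cycleCliques k fun _ => 2) = 6 := by
  refine IsGreatest.csSup_eq ⟨⟨inl 0, degSet_inl hk 0⟩, ?_⟩
  rintro _ ⟨j | ⟨i, a⟩, rfl⟩
  · exact (degSet_inl hk j).le
  · rw [degSet_inr (by omega)]; omega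

lemma minDeg_cycleCliques_two (hk : 3 ≤ k) : minDeg (cycleCliques k fun _ => 2) = 3 := by
  refine IsLeast.csInf_eq ⟨⟨inr ⟨0, 0⟩, degSet_inr (by omega) 0 0⟩, ?_⟩
  rintro _ ⟨j | ⟨i, a⟩, rfl⟩
  · rw [degSet_inl hk]; omega
  · exact (degSet_inr (by omega) i a).ge

end Degrees

/-- For `k ≥ 3`, the graph obtained from a cycle `C_k` by attaching a copy
of `K_2` joined to each pair of consecutive cycle vertices has `n = 3k` vertices,
`Δ = 6`, `δ = 3`, and satisfies `Z(G) = β(G) = 2k < (12k - 1)/5 = ((Δ-2)n - (Δ-δ) + 2)/(Δ-1)`. -/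
theorem stmt18 (k : ℕ) (hk : 3 ≤ k) :
    Fintype.card (Fin k ⊕ Σ _i : Fin k, Fin 2) = 3 * k ∧
    maxDeg (cycleCliques k fun _ => 2) = 6 ∧
    minDeg (cycleCliques k fun _ => 2) = 3 ∧
    zfNum (cycleCliques k fun _ => 2) = 2 * k ∧
    vcNum (cycleCliques k fun _ => 2) = 2 * k ∧
    (2 * (k : ℚ) < (12 * (k : ℚ) - 1) / 5) := by
  have : NeZero k := ⟨by omega⟩
  have hcard : Fintype.card (Fin k ⊕ Σ _i : Fin k, Fin 2) = 3 * k := by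
    simp only [Fintype.card_sum, Fintype.card_sigma, Fintype.card_fin, Finset.sum_const,
      Finset.card_univ, smul_eq_mul]
    ring
  refine ⟨hcard, maxDeg_cycleCliques_two hk, minDeg_cycleCliques_two hk, ?_, ?_, ?_⟩
  · rw [zfNum_cycleCliques fun _ => le_rfl, Nat.card_eq_fintype_card, hcard]
    omega
  · rw [vcNum_cycleCliques fun _ => one_le_two, Nat.card_eq_fintype_card, hcard]
    omega
  · have : (3 : ℚ) ≤ k := by exact_mod_cast hk
    linarith

end ZFPaper
end
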